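/- arXiv:1404.1732 — 6 statements merged into one kernel-verified Lean document; each statement's English description precedes it below -/
import Mathlib

section
/- For any sequence X_1,...,X_n of integers with 0 ≤ X_i ≤ m and any p ≥ 1, there exists a partitioning into p contiguous blocks whose maximum block weight is at most ⌊(S + (p-1)m)/p⌋, where S = Σ X_i. -/
private lemma greedy_split (B : ℕ) :
    ∀ (L : List ℕ) (c : ℕ), c ≤ B →
      ∃ q r : List ℕ, q ++ r = L ∧ c + q.sum ≤ B ∧
        (r = [] ∨ B < c + q.sum + r.headI) := by
  intro L
  induction L with
  | nil => intro c hc; exact ⟨[], [], rfl, by simpa, Or.inl rfl⟩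
  | cons a t ih =>
    intro c hc
    by_cases h : c + a ≤ B
    · obtain ⟨q, r, hqr, hs, hlast⟩ := ih (c + a) h
      refine ⟨a :: q, r, by simp [hqr], ?_, ?_⟩
      · simpa [add_assoc] using hs
      · rcases hlast with h' | h'
        · exact Or.inl h'
        · exact Or.inr (by simpa [add_assoc] using h')
    · exact ⟨[], a :: t, rfl, by simpa, Or.inr (by simpa using Nat.lt_of_not_le h)⟩

private lemma aux (m : ℕ) :
    ∀ p : ℕ, 1 ≤ p → ∀ L : List ℕ, (∀ x ∈ L, x ≤ m) →
      ∀ B : ℕ, L.sum + (p - 1) * m ≤ p * B + (p - 1) →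
        ∃ parts : List (List ℕ), parts.length = p ∧ parts.flatten = L ∧
          ∀ q ∈ parts, q.sum ≤ B := by
  intro p hp
  induction p, hp using Nat.le_induction with
  | base =>
    intro L hle B hB
    refine ⟨[L], rfl, by simp, ?_⟩
    intro q hq
    simp only [List.mem_singleton] at hq
    subst hq
    simpa using hB
  | succ n hn ih =>
    intro L hle B hB
    obtain ⟨q, r, hqr, hs, hlast⟩ := greedy_split B L 0 (Nat.zero_le B)
    simp only [Nat.zero_add] at hs hlast
    rcases hlast with hr | hgt
    · subst hr
      refine ⟨q :: List.replicate n [], by simp, by simpa using hqr, ?_⟩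
      intro x hx
      simp only [List.mem_cons, List.mem_replicate] at hx
      rcases hx with rfl | ⟨_, rfl⟩
      · exact hs
      · simp
    · -- r is nonempty
      rcases r with _ | ⟨h, t⟩
      · simp at hgt; omega
      simp only [List.headI] at hgt
      have hh : h ≤ m := hle h (by rw [← hqr]; simp)
      have hLsum : L.sum = q.sum + (h + t.sum) := by
        rw [← hqr]; simp
      -- arithmetic facts to help omega with nonlinear terms
      have e1 : (n + 1) * B = n * B + B := by ring
      have e2 : 1 ≤ n := hn
      have e3 : (n - 1) * m + m = n * m := by
        calc (n - 1) * m + m = ((n - 1) + 1) * m := by ring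
          _ = n * m := by rw [Nat.sub_add_cancel e2]
      have hB' : (h :: t).sum + (n - 1) * m ≤ n * B + (n - 1) := by
        simp only [List.sum_cons]
        simp only [Nat.add_sub_cancel] at hB
        rw [hLsum] at hB
        omega
      obtain ⟨parts, hlen, hflat, hsum⟩ := ih (h :: t) (fun x hx => hle x (by rw [← hqr]; simp [hx])) B hB'
      refine ⟨q :: parts, by simp [hlen], by simp [hflat, hqr], ?_⟩
      intro x hx
      rcases List.mem_cons.mp hx with rfl | hx'
      · exact hs
      · exact hsum x hx'

/-- For any sequence of integers `0 ≤ X_i ≤ m` and any `p ≥ 1`, there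
exists a partitioning into `p` contiguous blocks whose maximum block weight is at
most `⌊(S + (p-1)m)/p⌋`. -/
theorem stmt1 (L : List ℕ) (m p : ℕ) (hp : 1 ≤ p) (hle : ∀ x ∈ L, x ≤ m) :
    ∃ parts : List (List ℕ), parts.length = p ∧ parts.flatten = L ∧
      ∀ q ∈ parts, q.sum ≤ (L.sum + (p - 1) * m) / p := by
  set N := L.sum + (p - 1) * m with hN
  have h1 : p * (N / p) + N % p = N := Nat.div_add_mod N p
  have h2 : N % p < p := Nat.mod_lt N (by omega)
  exact aux m p hp L hle (N / p) (by omega)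
end

section
/- The algorithm that outputs max(m, S/p) + m, where S is the total weight and m the maximum element of the sequence, is a 2-approximation for the optimal bottleneck value: B* ≤ max(m, S/p) + m ≤ 2·B*. -/
/-!
Greedy cutting with threshold `t = S/p`: close a block as soon as its weight exceeds `t`.
Such a block weighs at most `t + m`, and it leaves at most `(p - 1) t` for the remaining
`p - 1` blocks, so by induction on `p` all blocks weigh at most `S/p + m`. Conversely, the
bottleneck of any `p`-block partitioning is at least the block containing `m`, hence `≥ m`,
and at least the average block weight `S/p`.
-/

namespace List

theorem exists_append_eq_sum_le_add (c : ℕ) :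
    ∀ (L : List ℕ), (∀ x ∈ L, x ≤ c) → ∀ t : ℝ, 0 ≤ t →
      ∃ a b, a ++ b = L ∧ (a.sum : ℝ) ≤ t + c ∧ (b = [] ∨ t < a.sum)
  | [], _, t, ht => ⟨[], [], rfl, by simp only [sum_nil, Nat.cast_zero]; positivity, .inl rfl⟩
  | x :: xs, hL, t, ht => by
    have hxc : (x : ℝ) ≤ c := by exact_mod_cast hL x mem_cons_self
    by_cases hxt : (x : ℝ) ≤ t
    · obtain ⟨a, b, rfl, ha, hb⟩ := exists_append_eq_sum_le_add c xs
        (fun y hy => hL y (mem_cons_of_mem x hy)) (t - x) (by linarith)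
      refine ⟨x :: a, b, rfl, ?_, hb.imp_right fun h => ?_⟩ <;>
        · rw [sum_cons, Nat.cast_add]; linarith
    · exact ⟨[x], xs, rfl, by simp only [sum_singleton]; linarith, .inr (by simpa using hxt)⟩

theorem exists_flatten_eq_sum_le_add (c : ℕ) :
    ∀ (k : ℕ) (t : ℝ) (L : List ℕ), (∀ x ∈ L, x ≤ c) → (L.sum : ℝ) ≤ (k + 1) * t →
      ∃ parts : List (List ℕ), parts.length = k + 1 ∧ parts.flatten = L ∧
        ∀ q ∈ parts, (q.sum : ℝ) ≤ t + c
  | 0, t, L, _, hS => by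
    refine ⟨[L], rfl, flatten_singleton, fun q hq => ?_⟩
    rw [mem_singleton.mp hq]
    rw [Nat.cast_zero, zero_add, one_mul] at hS
    linarith [(c.cast_nonneg : (0 : ℝ) ≤ c)]
  | k + 1, t, L, hL, hS => by
    have ht : 0 ≤ t := by
      have : (0 : ℝ) ≤ (k + 1 + 1) * t := (L.sum.cast_nonneg).trans (by exact_mod_cast hS)
      exact nonneg_of_mul_nonneg_right this (by positivity)
    obtain ⟨a, b, rfl, ha, hb⟩ := exists_append_eq_sum_le_add c L hL t ht
    have hb_sum : (b.sum : ℝ) ≤ (k + 1) * t := by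
      rcases hb with rfl | ha_gt
      · simp only [sum_nil, Nat.cast_zero]; positivity
      · rw [sum_append, Nat.cast_add, Nat.cast_succ] at hS; linarith
    obtain ⟨parts, hlen, hflat, hparts⟩ := exists_flatten_eq_sum_le_add c k t b
      (fun x hx => hL x (mem_append_right a hx)) hb_sum
    refine ⟨a :: parts, by simp [hlen], by simp [hflat], ?_⟩
    rintro q (_ | ⟨_, hq⟩)
    exacts [ha, hparts q hq]

theorem le_foldr_max_map_sum_of_mem_flatten {parts : List (List ℕ)} {x : ℕ}
    (hx : x ∈ parts.flatten) : x ≤ (parts.map sum).foldr max 0 := by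
  obtain ⟨q, hq, hxq⟩ := mem_flatten.mp hx
  exact le_max_of_le' 0 (mem_map_of_mem hq) (le_sum_of_mem hxq)

theorem sum_flatten_le_length_mul_foldr_max (parts : List (List ℕ)) :
    parts.flatten.sum ≤ parts.length * (parts.map sum).foldr max 0 := by
  rw [sum_flatten, ← length_map sum, ← smul_eq_mul]
  exact sum_le_card_nsmul _ _ fun s hs => le_max_of_le' 0 hs le_rfl

end List

open List in
/-- With `m` the maximum element and `S` the total weight, the value
`max (m, S/p) + m` is a 2-approximation of the optimal bottleneck value `B*`:
there is a `p`-block partitioning whose every block weight is at most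
`max (m, S/p) + m`, and `max (m, S/p) + m ≤ 2·B'` for the bottleneck `B'` of any
`p`-block partitioning (in particular for `B*`). -/
theorem stmt6 (L : List ℕ) (m p : ℕ) (hp : 1 ≤ p)
    (hle : ∀ x ∈ L, x ≤ m) (hmem : m ∈ L) :
    (∃ parts : List (List ℕ), parts.length = p ∧ parts.flatten = L ∧
        ∀ q ∈ parts, (q.sum : ℝ) ≤ max (m : ℝ) ((L.sum : ℝ) / p) + m) ∧
    (∀ parts : List (List ℕ), parts.length = p → parts.flatten = L →
        max (m : ℝ) ((L.sum : ℝ) / p) + m ≤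
          2 * (((parts.map List.sum).foldr max 0 : ℕ) : ℝ)) := by
  have hp_pos : (0 : ℝ) < p := by exact_mod_cast hp
  constructor
  · obtain ⟨k, rfl⟩ := Nat.exists_eq_add_of_le' hp
    have hS : (L.sum : ℝ) ≤ ((k : ℝ) + 1) * (L.sum / (k + 1 : ℕ)) := by
      rw [Nat.cast_succ, mul_div_cancel₀ _ (by positivity)]
    obtain ⟨parts, hlen, hflat, hparts⟩ := exists_flatten_eq_sum_le_add m k _ L hle hS
    exact ⟨parts, hlen, hflat, fun q hq => (hparts q hq).trans (by gcongr; exact le_max_right _ _)⟩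
  · rintro parts hlen rfl
    set B := (parts.map sum).foldr max 0
    have hmB : (m : ℝ) ≤ B := by exact_mod_cast le_foldr_max_map_sum_of_mem_flatten hmem
    have hSB : (parts.flatten.sum : ℝ) / p ≤ B := by
      rw [div_le_iff₀ hp_pos, mul_comm, ← hlen]
      exact_mod_cast sum_flatten_le_length_mul_foldr_max parts
    linarith [max_le hmB hSB]
end

section
/- Suppose the ProbeExt algorithm with parameters m, p ≥ 2, and 0 ≤ α < 1 performs i ≥ 1 merge operations on an input stream. Then the total weight of the input stream is at least (pm/2)·(2^i(1+α) − α − i) − (m/2)·(i+α). -/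
open scoped Classical in
/-- The ProbeExt scan: greedily creates maximal blocks of weight at most the current
bottleneck `B` (initially `m(1+α)`); whenever all `p` blocks are used and input
remains, adjacent blocks are merged, `B` is doubled and the scan continues.
`probeExtMerges p B W P L` returns the number of merge (doubling) operations
performed, where `W` is the current block weight and `P` the current block index. -/
noncomputable def probeExtMerges (p : ℕ) : ℝ → ℝ → ℕ → List ℕ → ℕ
  | _, _, _, [] => 0
  | B, W, P, x :: xs =>
    if W + x ≤ B then probeExtMerges p B (W + x) P xs
    else if P < p then probeExtMerges p B (x : ℝ) (P + 1) xs
    else 1 + probeExtMerges p (2 * B) (if p % 2 = 0 then (x : ℝ) else W + x) (p / 2 + 1) xs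

/-- Credit carried by the entry block of a level (odd `p` only). -/
noncomputable def pexEta (p m : ℕ) (α : ℝ) (P j : ℕ) : ℝ :=
  if p % 2 = 1 ∧ P = p / 2 + 1 then 2 ^ j * ((m : ℝ) * (1 + α)) else 0

/-- Guaranteed future weight from a state at level `j` (bottleneck `2·2^j·m(1+α)`)
with current block index `P`, given that `i` more merges happen. -/
noncomputable def pexT (p m : ℕ) (α : ℝ) : ℕ → ℕ → ℕ → ℝ
  | 0, _, _ => 0
  | i + 1, P, j =>
      ((p : ℝ) - P) * (2 * 2 ^ j * ((m : ℝ) * (1 + α)) - m) - pexEta p m α P j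
        + (2 * 2 ^ j * ((m : ℝ) * (1 + α)) - (if p % 2 = 0 then (m : ℝ) else 0))
        + pexT p m α i (p / 2 + 1) (j + 1)

/-- Guaranteed future weight from a state at level 0 (bottleneck `m(1+α)`),
using the pairing argument, given that `i` merges happen. -/
noncomputable def pexU (p m : ℕ) (α : ℝ) : ℕ → ℕ → ℝ
  | 0, _ => 0
  | i + 1, P =>
      (((p - P + P % 2) / 2 : ℕ) : ℝ) * ((m : ℝ) * (1 + α))
        + (if p % 2 = 1 then (m : ℝ) * (1 + α) else 0)
        + pexT p m α i (p / 2 + 1) 0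

section lemmas

variable (m p : ℕ) (α : ℝ)

lemma pex_one_le_two_pow (j : ℕ) : (1 : ℝ) ≤ 2 ^ j :=
  one_le_pow₀ (by norm_num)

lemma pex_m_le_B0 (hα0 : 0 ≤ α) : (m : ℝ) ≤ (m : ℝ) * (1 + α) := by
  nlinarith [Nat.cast_nonneg (α := ℝ) m]

lemma pex_B0_nonneg (hα0 : 0 ≤ α) : 0 ≤ (m : ℝ) * (1 + α) := by
  nlinarith [Nat.cast_nonneg (α := ℝ) m]

lemma pex_m_le_pow (hα0 : 0 ≤ α) (j : ℕ) : (m : ℝ) ≤ 2 ^ j * ((m : ℝ) * (1 + α)) := by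
  have h1 := pex_one_le_two_pow j
  have h2 := pex_m_le_B0 m α hα0
  have h3 := pex_B0_nonneg m α hα0
  nlinarith

lemma pexT_step (hp : 2 ≤ p) (hα0 : 0 ≤ α) (i P j : ℕ) (hP1 : p / 2 + 1 ≤ P)
    (hP2 : P < p) :
    pexT p m α i P j + pexEta p m α P j
      ≤ pexT p m α i (P + 1) j + (2 * 2 ^ j * ((m : ℝ) * (1 + α)) - m) := by
  have hEnext : pexEta p m α (P + 1) j = 0 := by
    rw [pexEta, if_neg]; omega
  cases i with
  | zero =>
      have h1 := pex_m_le_pow m α hα0 j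
      have h2 := pex_m_le_pow m α hα0 (j + 1)
      have hpow : (2:ℝ) ^ (j+1) = 2 * 2 ^ j := by rw [pow_succ]; ring
      rw [pexT, pexT, pexEta]
      split_ifs with h
      · rw [hpow] at h2; linarith
      · linarith
  | succ i =>
      rw [pexT, pexT, hEnext]
      have hc : ((P + 1 : ℕ) : ℝ) = (P : ℝ) + 1 := by push_cast; ring
      rw [hc]
      ring_nf
      linarith [le_refl (0:ℝ)]

lemma pexT_main (hp : 2 ≤ p) (hα0 : 0 ≤ α) (L : List ℕ) :
    ∀ (W : ℝ) (P j : ℕ), (∀ x ∈ L, x ≤ m) → p / 2 + 1 ≤ P → P ≤ p → 0 ≤ W →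
      pexEta p m α P j ≤ W →
      pexT p m α (probeExtMerges p (2 * 2 ^ j * ((m : ℝ) * (1 + α))) W P L) P j
          + pexEta p m α P j
        ≤ W + (L.sum : ℝ) := by
  induction L with
  | nil =>
      intro W P j _ _ _ hW he
      rw [probeExtMerges, pexT]
      simp only [List.sum_nil, Nat.cast_zero]
      linarith
  | cons x xs ih =>
      intro W P j hx hP1 hP2 hW he
      have hxm : (x : ℝ) ≤ m := by exact_mod_cast hx x (by simp)
      have hxs : ∀ y ∈ xs, y ≤ m := fun y hy => hx y (by simp [hy])
      have hx0 : (0 : ℝ) ≤ x := Nat.cast_nonneg x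
      have hsum : ((x :: xs).sum : ℝ) = (x : ℝ) + (xs.sum : ℝ) := by
        push_cast [List.sum_cons]; ring
      rw [probeExtMerges]
      split_ifs with h1 h2 hpar hpar
      · -- current block extended
        have := ih (W + x) P j hxs hP1 hP2 (by linarith) (by linarith)
        rw [hsum]; linarith
      · -- new block started
        have hEnext : pexEta p m α (P + 1) j = 0 := by
          rw [pexEta, if_neg]; omega
        have ihh := ih (x : ℝ) (P + 1) j hxs (by omega) (by omega) hx0 (by rw [hEnext]; exact hx0)
        rw [hEnext] at ihh
        have hstep := pexT_step m p α hp hα0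
          (probeExtMerges p (2 * 2 ^ j * ((m : ℝ) * (1 + α))) (x : ℝ) (P + 1) xs)
          P j hP1 h2
        have hWge : 2 * 2 ^ j * ((m : ℝ) * (1 + α)) - m ≤ W := by
          push_neg at h1; linarith
        rw [hsum]; linarith
      · -- merge, p even
        have hPp : p = P := by omega
        subst hPp
        have hEp : pexEta p m α p j = 0 := by
          rw [pexEta, if_neg]; omega
        have hBB : 2 * (2 * 2 ^ j * ((m : ℝ) * (1 + α)))
            = 2 * 2 ^ (j + 1) * ((m : ℝ) * (1 + α)) := by rw [pow_succ]; ring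
        rw [hBB]
        have hpm : p / 2 + 1 ≤ p := by omega
        have hlt : 2 * 2 ^ j * ((m : ℝ) * (1 + α)) < W + x := by push_neg at h1; exact h1
        have hEnext : pexEta p m α (p / 2 + 1) (j + 1) = 0 := by
          rw [pexEta, if_neg]; omega
        have ihh := ih (x : ℝ) (p / 2 + 1) (j + 1) hxs le_rfl hpm hx0 (by rw [hEnext]; exact hx0)
        rw [hEnext] at ihh
        rw [Nat.add_comm 1 _, pexT, hEp, if_pos hpar]
        have hz : ((p : ℝ) - (p : ℝ)) * (2 * 2 ^ j * ((m : ℝ) * (1 + α)) - m) = 0 := by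
          ring
        rw [hsum]
        have hWge : 2 * 2 ^ j * ((m : ℝ) * (1 + α)) - m ≤ W := by linarith
        linarith
      · -- merge, p odd
        have hPp : p = P := by omega
        subst hPp
        have hEp : pexEta p m α p j = 0 := by
          rw [pexEta, if_neg]; omega
        have hBB : 2 * (2 * 2 ^ j * ((m : ℝ) * (1 + α)))
            = 2 * 2 ^ (j + 1) * ((m : ℝ) * (1 + α)) := by rw [pow_succ]; ring
        rw [hBB]
        have hpm : p / 2 + 1 ≤ p := by omega
        have hlt : 2 * 2 ^ j * ((m : ℝ) * (1 + α)) < W + x := by push_neg at h1; exact h1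
        have hpow : (2:ℝ) ^ (j+1) = 2 * 2 ^ j := by rw [pow_succ]; ring
        have hodd : p % 2 = 1 := by omega
        have hEnext : pexEta p m α (p / 2 + 1) (j + 1)
            = 2 ^ (j + 1) * ((m : ℝ) * (1 + α)) := by
          rw [pexEta, if_pos ⟨hodd, rfl⟩]
        have heW : pexEta p m α (p / 2 + 1) (j + 1) ≤ W + x := by
          rw [hEnext, hpow]; linarith
        have ihh := ih (W + x) (p / 2 + 1) (j + 1) hxs le_rfl hpm (by linarith) heW
        rw [hEnext] at ihh
        have hpowB : (2:ℝ) ^ (j + 1) * ((m : ℝ) * (1 + α))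
            = 2 * 2 ^ j * ((m : ℝ) * (1 + α)) := by rw [hpow]
        rw [hpowB] at ihh
        rw [Nat.add_comm 1 _, pexT, hEp, if_neg hpar]
        have hz : ((p : ℝ) - (p : ℝ)) * (2 * 2 ^ j * ((m : ℝ) * (1 + α)) - m) = 0 := by
          ring
        rw [hsum]
        linarith

lemma pexU_step_odd (hp : 2 ≤ p) (hα0 : 0 ≤ α) (i P : ℕ) (hPo : P % 2 = 1)
    (hP2 : P < p) :
    pexU p m α i P ≤ pexU p m α i (P + 1) + (m : ℝ) * (1 + α) := by
  cases i with
  | zero => rw [pexU, pexU]; have := pex_B0_nonneg m α hα0; linarith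
  | succ i =>
      rw [pexU, pexU]
      have hN : (p - P + P % 2) / 2 = (p - (P + 1) + (P + 1) % 2) / 2 + 1 := by omega
      rw [hN]
      push_cast
      ring_nf
      linarith [le_refl (0:ℝ)]

lemma pexU_step_even (hp : 2 ≤ p) (hα0 : 0 ≤ α) (i P : ℕ) (hPo : P % 2 = 0)
    (hP2 : P < p) :
    pexU p m α i P = pexU p m α i (P + 1) := by
  cases i with
  | zero => rfl
  | succ i =>
      rw [pexU, pexU]
      have hN : (p - P + P % 2) / 2 = (p - (P + 1) + (P + 1) % 2) / 2 := by omega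
      rw [hN]

lemma pexU_main (hp : 2 ≤ p) (hα0 : 0 ≤ α) (L : List ℕ) :
    ∀ (W : ℝ) (P : ℕ), (∀ x ∈ L, x ≤ m) → 1 ≤ P → P ≤ p → 0 ≤ W →
      pexU p m α (probeExtMerges p ((m : ℝ) * (1 + α)) W P L) P
        ≤ (if P % 2 = 1 then W else 0) + (L.sum : ℝ) := by
  induction L with
  | nil =>
      intro W P _ _ _ hW
      rw [probeExtMerges, pexU]
      simp only [List.sum_nil, Nat.cast_zero]
      split_ifs <;> linarith
  | cons x xs ih =>
      intro W P hx h1P hP2 hW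
      have hxm : (x : ℝ) ≤ m := by exact_mod_cast hx x (by simp)
      have hxs : ∀ y ∈ xs, y ≤ m := fun y hy => hx y (by simp [hy])
      have hx0 : (0 : ℝ) ≤ x := Nat.cast_nonneg x
      have hsum : ((x :: xs).sum : ℝ) = (x : ℝ) + (xs.sum : ℝ) := by
        push_cast [List.sum_cons]; ring
      rw [probeExtMerges]
      by_cases h1 : W + (x : ℝ) ≤ (m : ℝ) * (1 + α)
      · rw [if_pos h1]
        have := ih (W + x) P hxs h1P hP2 (by linarith)
        rw [hsum]
        by_cases hPo : P % 2 = 1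
        · rw [if_pos hPo] at this ⊢; linarith
        · rw [if_neg hPo] at this ⊢; linarith
      · rw [if_neg h1]
        by_cases h2 : P < p
        · rw [if_pos h2]
          -- new block
          have ihh := ih (x : ℝ) (P + 1) hxs (by omega) (by omega) hx0
          rw [hsum]
          by_cases hPo : P % 2 = 1
          · have hP1e : ¬((P + 1) % 2 = 1) := by omega
            rw [if_neg hP1e] at ihh
            have hstep := pexU_step_odd m p α hp hα0
              (probeExtMerges p ((m : ℝ) * (1 + α)) (x : ℝ) (P + 1) xs) P hPo h2
            have hWx : (m : ℝ) * (1 + α) < W + x := by push_neg at h1; exact h1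
            rw [if_pos hPo]
            linarith
          · have hP1o : (P + 1) % 2 = 1 := by omega
            rw [if_pos hP1o] at ihh
            have hstep := pexU_step_even m p α hp hα0
              (probeExtMerges p ((m : ℝ) * (1 + α)) (x : ℝ) (P + 1) xs) P (by omega) h2
            rw [if_neg hPo, hstep]
            linarith
        · -- first merge
          rw [if_neg h2]
          have hPp : p = P := by omega
          subst hPp
          have hB1 : 2 * ((m : ℝ) * (1 + α)) = 2 * 2 ^ 0 * ((m : ℝ) * (1 + α)) := by
            norm_num
          rw [hB1]
          have hpm : p / 2 + 1 ≤ p := by omega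
          have hN0 : ((p - p + p % 2) / 2 : ℕ) = 0 := by omega
          have hlt : (m : ℝ) * (1 + α) < W + x := by push_neg at h1; exact h1
          rw [hsum]
          by_cases hpar : p % 2 = 0
          · rw [if_pos hpar]
            have hEnext : pexEta p m α (p / 2 + 1) 0 = 0 := by
              rw [pexEta, if_neg]; omega
            have ihh := pexT_main m p α hp hα0 xs (x : ℝ) (p / 2 + 1) 0 hxs le_rfl hpm hx0
              (by rw [hEnext]; exact hx0)
            rw [hEnext] at ihh
            rw [Nat.add_comm 1 _, pexU, hN0, if_neg (by omega : ¬ p % 2 = 1),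
              if_neg (by omega : ¬ p % 2 = 1), Nat.cast_zero]
            linarith
          · rw [if_neg hpar]
            have hodd : p % 2 = 1 := by omega
            have hEnext : pexEta p m α (p / 2 + 1) 0 = (m : ℝ) * (1 + α) := by
              rw [pexEta, if_pos ⟨hodd, rfl⟩]; norm_num
            have ihh := pexT_main m p α hp hα0 xs (W + x) (p / 2 + 1) 0 hxs le_rfl hpm
              (by linarith) (by rw [hEnext]; linarith)
            rw [hEnext] at ihh
            rw [Nat.add_comm 1 _, pexU, hN0, if_pos hodd, if_pos hodd, Nat.cast_zero]
            linarith

lemma pexT_bound (hp : 2 ≤ p) (hα0 : 0 ≤ α) :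
    ∀ (i j : ℕ),
      ((p / 2 : ℕ) : ℝ) * ((2 ^ i - 1) * (2 * 2 ^ j * ((m : ℝ) * (1 + α))) - i * m)
          + (if p % 2 = 1 then (2 ^ i - 1) * (2 ^ j * ((m : ℝ) * (1 + α))) else 0)
        ≤ pexT p m α i (p / 2 + 1) j := by
  intro i
  induction i with
  | zero =>
      intro j
      rw [pexT]
      split_ifs <;> norm_num
  | succ i ih =>
      intro j
      have ihj := ih (j + 1)
      rw [pexT]
      have hpc : (p : ℝ) = 2 * ((p / 2 : ℕ) : ℝ) + ((p % 2 : ℕ) : ℝ) := by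
        have hnat : p = 2 * (p / 2) + p % 2 := by omega
        exact_mod_cast congrArg (Nat.cast : ℕ → ℝ) hnat
      have hcast : ((p / 2 + 1 : ℕ) : ℝ) = ((p / 2 : ℕ) : ℝ) + 1 := by push_cast; ring
      rw [hcast]
      have hpow1 : (2:ℝ) ^ (i+1) = 2 * 2 ^ i := by rw [pow_succ]; ring
      have hpow2 : (2:ℝ) ^ (j+1) = 2 * 2 ^ j := by rw [pow_succ]; ring
      have hic : ((i + 1 : ℕ) : ℝ) = (i : ℝ) + 1 := by push_cast; ring
      by_cases hpar : p % 2 = 0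
      · have hE : pexEta p m α (p / 2 + 1) j = 0 := by
          rw [pexEta, if_neg]; omega
        rw [hE, if_pos hpar, if_neg (by omega : ¬ p % 2 = 1)]
        rw [if_neg (by omega : ¬ p % 2 = 1)] at ihj
        have hp0 : ((p % 2 : ℕ) : ℝ) = 0 := by rw [hpar]; norm_num
        rw [hp0] at hpc
        have key : ((p / 2 : ℕ) : ℝ)
              * ((2 ^ (i+1) - 1) * (2 * 2 ^ j * ((m : ℝ) * (1 + α))) - (↑(i+1)) * m) + 0
            = ((p : ℝ) - (((p / 2 : ℕ) : ℝ) + 1)) * (2 * 2 ^ j * ((m : ℝ) * (1 + α)) - m)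
              - 0 + (2 * 2 ^ j * ((m : ℝ) * (1 + α)) - (m : ℝ))
              + (((p / 2 : ℕ) : ℝ)
                * ((2 ^ i - 1) * (2 * 2 ^ (j+1) * ((m : ℝ) * (1 + α))) - i * m) + 0) := by
          rw [hpc, hpow1, hpow2, hic]; ring
        linarith [key, ihj]
      · have hodd : p % 2 = 1 := by omega
        have hE : pexEta p m α (p / 2 + 1) j = 2 ^ j * ((m : ℝ) * (1 + α)) := by
          rw [pexEta, if_pos ⟨hodd, rfl⟩]
        rw [hE, if_neg hpar, if_pos hodd]
        rw [if_pos hodd] at ihj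
        have hp1 : ((p % 2 : ℕ) : ℝ) = 1 := by rw [hodd]; norm_num
        rw [hp1] at hpc
        have key : ((p / 2 : ℕ) : ℝ)
              * ((2 ^ (i+1) - 1) * (2 * 2 ^ j * ((m : ℝ) * (1 + α))) - (↑(i+1)) * m)
              + (2 ^ (i+1) - 1) * (2 ^ j * ((m : ℝ) * (1 + α)))
            = ((p : ℝ) - (((p / 2 : ℕ) : ℝ) + 1)) * (2 * 2 ^ j * ((m : ℝ) * (1 + α)) - m)
              - 2 ^ j * ((m : ℝ) * (1 + α)) + (2 * 2 ^ j * ((m : ℝ) * (1 + α)) - 0)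
              + (((p / 2 : ℕ) : ℝ)
                * ((2 ^ i - 1) * (2 * 2 ^ (j+1) * ((m : ℝ) * (1 + α))) - i * m)
                + (2 ^ i - 1) * (2 ^ (j+1) * ((m : ℝ) * (1 + α)))) := by
          rw [hpc, hpow1, hpow2, hic]; ring
        linarith [key, ihj]

end lemmas

/-- If ProbeExt with parameters `m`, `p ≥ 2`, `0 ≤ α < 1` performs
`i ≥ 1` merge operations on an input stream whose elements are at most `m`, then the
total weight of the stream is at least
`(pm/2)·(2^i(1+α) − α − i) − (m/2)·(i+α)`. -/
theorem stmt7 (m p : ℕ) (α : ℝ) (L : List ℕ) (i : ℕ)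
    (hp : 2 ≤ p) (hα0 : 0 ≤ α) (hα1 : α < 1) (hle : ∀ x ∈ L, x ≤ m)
    (hi : i = probeExtMerges p ((m : ℝ) * (1 + α)) 0 1 L) (hi1 : 1 ≤ i) :
    ((p : ℝ) * m / 2) * (2 ^ i * (1 + α) - α - i) - ((m : ℝ) / 2) * (i + α)
      ≤ (L.sum : ℝ) := by
  obtain ⟨i', rfl⟩ : ∃ i', i = i' + 1 := ⟨i - 1, by omega⟩
  have hL1 := pexU_main m p α hp hα0 L 0 1 hle le_rfl (by omega) le_rfl
  rw [← hi] at hL1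
  rw [if_pos (by norm_num : (1:ℕ) % 2 = 1)] at hL1
  rw [pexU] at hL1
  have hN1 : ((p - 1 + 1 % 2) / 2 : ℕ) = p / 2 := by omega
  rw [hN1] at hL1
  have hT := pexT_bound m p α hp hα0 i' 0
  have hpc : (p : ℝ) = 2 * ((p / 2 : ℕ) : ℝ) + ((p % 2 : ℕ) : ℝ) := by
    have hnat : p = 2 * (p / 2) + p % 2 := by omega
    exact_mod_cast congrArg (Nat.cast : ℕ → ℝ) hnat
  have hm0 : (0:ℝ) ≤ m := Nat.cast_nonneg m
  have hi0 : (0:ℝ) ≤ i' := Nat.cast_nonneg i'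
  have hpow1 : (2:ℝ) ^ (i'+1) = 2 * 2 ^ i' := by rw [pow_succ]; ring
  have hic : ((i' + 1 : ℕ) : ℝ) = (i' : ℝ) + 1 := by push_cast; ring
  by_cases hpar : p % 2 = 0
  · rw [if_neg (by omega : ¬ p % 2 = 1)] at hL1 hT
    have hp0 : ((p % 2 : ℕ) : ℝ) = 0 := by rw [hpar]; norm_num
    rw [hp0] at hpc
    have key : ((p : ℝ) * m / 2) * (2 ^ (i'+1) * (1 + α) - α - (↑(i'+1))) 
          - ((m : ℝ) / 2) * ((↑(i'+1)) + α)
        = ((p / 2 : ℕ) : ℝ) * ((m : ℝ) * (1 + α))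
          + (((p / 2 : ℕ) : ℝ) * ((2 ^ i' - 1) * (2 * 2 ^ 0 * ((m : ℝ) * (1 + α)))
            - i' * m) + 0)
          - ((m : ℝ) / 2) * ((i' : ℝ) + 1 + α) := by
      rw [hpc, hpow1, hic]; norm_num; ring
    have hpos : 0 ≤ ((m : ℝ) / 2) * ((i' : ℝ) + 1 + α) := by positivity
    linarith [key, hT, hL1]
  · have hodd : p % 2 = 1 := by omega
    rw [if_pos hodd] at hL1 hT
    have hp1 : ((p % 2 : ℕ) : ℝ) = 1 := by rw [hodd]; norm_num
    rw [hp1] at hpc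
    have key : ((p : ℝ) * m / 2) * (2 ^ (i'+1) * (1 + α) - α - (↑(i'+1)))
          - ((m : ℝ) / 2) * ((↑(i'+1)) + α)
        = ((p / 2 : ℕ) : ℝ) * ((m : ℝ) * (1 + α)) + ((m : ℝ) * (1 + α))
          + (((p / 2 : ℕ) : ℝ) * ((2 ^ i' - 1) * (2 * 2 ^ 0 * ((m : ℝ) * (1 + α)))
            - i' * m)
            + (2 ^ i' - 1) * (2 ^ 0 * ((m : ℝ) * (1 + α))))
          - (m : ℝ) * ((i' : ℝ) + 1 + α) := by
      rw [hpc, hpow1, hic]; norm_num; ring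
    have hpos : 0 ≤ (m : ℝ) * ((i' : ℝ) + 1 + α) := by positivity
    linarith [key, hT, hL1]
end

section
/- Any randomized one-way two-party communication protocol for Index with error probability at most 1/3, where Alice's string S is uniform in {0,1}^N and the index I is uniform in {⌈N/2⌉,...,N}, requires expected message length Ω(N). -/
/-!
Fix a seed. Call `S` good if Alice's message is shorter than `L ≈ N / 120` and Bob errs on at
most `m = ⌊2h/5⌋` of the `h` admissible indices. A good `S` is determined by its message, its
set of errors and its values off the admissible indices, so there are at most
`2^L · #{D ⊆ H | #D ≤ m} · 2^(N-h) ≤ 2^N / 12` of them (binomial tail bound with weight `2/3`).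
By Markov's inequality at most `5/6` of the pairs (seed, `S`) have more than `m` errors, so at
least `1/12` of them have a message of length `≥ L`.
-/

open Finset

/-- `l` read as little-endian binary digits followed by a `1`, which makes the code injective
across lengths. -/
def binaryCode (l : List Bool) : ℕ := Nat.ofDigits 2 (l.map Bool.toNat ++ [1])

lemma binaryCode_digits_lt (l : List Bool) : ∀ d ∈ l.map Bool.toNat ++ [1], d < 2 := by
  simp only [List.mem_append, List.mem_map, List.mem_singleton]
  rintro _ (⟨b, -, rfl⟩ | rfl)
  exacts [Bool.toNat_lt b, one_lt_two]

lemma binaryCode_injective : Function.Injective binaryCode := by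
  have hdigits (l : List Bool) : Nat.digits 2 (binaryCode l) = l.map Bool.toNat ++ [1] :=
    Nat.digits_ofDigits 2 one_lt_two _ (binaryCode_digits_lt l) (by simp)
  have htoNat : Function.Injective Bool.toNat := by
    intro a b; cases a <;> cases b <;> simp
  intro l₁ l₂ h
  have := hdigits l₁
  rw [h, hdigits l₂, List.append_cancel_right_eq] at this
  exact (List.map_injective_iff.2 htoNat) this.symm

lemma binaryCode_lt (l : List Bool) : binaryCode l < 2 ^ (l.length + 1) := by
  simpa [binaryCode] using Nat.ofDigits_lt_base_pow_length one_lt_two (binaryCode_digits_lt l)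

theorem card_filter_card_le_mul_pow_le {α : Type*} (s : Finset α) (m : ℕ) {x : ℝ}
    (hx₀ : 0 ≤ x) (hx₁ : x ≤ 1) :
    #{t ∈ s.powerset | #t ≤ m} * x ^ m ≤ (x + 1) ^ #s := by
  classical
  calc #{t ∈ s.powerset | #t ≤ m} * x ^ m
      = ∑ t ∈ s.powerset with #t ≤ m, x ^ m := by rw [sum_const, nsmul_eq_mul]
    _ ≤ ∑ t ∈ s.powerset with #t ≤ m, x ^ #t :=
        sum_le_sum fun t ht => pow_le_pow_of_le_one hx₀ hx₁ (mem_filter.1 ht).2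
    _ ≤ ∑ t ∈ s.powerset, x ^ #t * 1 ^ (#s - #t) := by
        simp only [one_pow, mul_one]
        exact sum_le_sum_of_subset_of_nonneg (filter_subset _ _) fun _ _ _ => by positivity
    _ = (x + 1) ^ #s := sum_pow_mul_eq_add_pow x 1 s

theorem twelve_mul_two_pow_mul_le {h m L : ℕ} {T : ℝ} (hT₀ : 0 ≤ T)
    (hT : T * (2 / 3) ^ m ≤ (2 / 3 + 1) ^ h) (hm : 5 * m ≤ 2 * h) (hL : 60 * L ≤ h)
    (hL₅ : 5 ≤ L) : 12 * 2 ^ L * T ≤ 2 ^ h := by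
  -- Fifth powers: `T^5 ≤ (28125/972)^h`, `32 / (28125/972) = 31104/28125`, and
  -- `(31104/28125)^60 ≥ 384 = 12 · 32`.
  have hT5 : T ^ 5 * (4 / 9) ^ h ≤ (3125 / 243) ^ h := calc
    T ^ 5 * (4 / 9) ^ h = T ^ 5 * ((2 / 3) ^ (2 * h)) := by rw [pow_mul]; norm_num
    _ ≤ T ^ 5 * (2 / 3) ^ (5 * m) := by
        gcongr T ^ 5 * ?_; exact pow_le_pow_of_le_one (by norm_num) (by norm_num) hm
    _ = (T * (2 / 3) ^ m) ^ 5 := by ring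
    _ ≤ ((2 / 3 + 1) ^ h) ^ 5 := by gcongr
    _ = (3125 / 243) ^ h := by rw [← pow_mul, mul_comm, pow_mul]; norm_num
  have h384 : (384 : ℝ) ^ L ≤ (31104 / 28125) ^ h := calc
    (384 : ℝ) ^ L ≤ ((31104 / 28125) ^ 60) ^ L := by gcongr; norm_num
    _ ≤ (31104 / 28125) ^ h := by rw [← pow_mul]; exact pow_le_pow_right₀ (by norm_num) hL
  refine (pow_le_pow_iff_left₀ (by positivity) (by positivity) (by norm_num : 5 ≠ 0)).1 ?_
  calc (12 * 2 ^ L * T) ^ 5 = 12 ^ 5 * 32 ^ L * T ^ 5 := by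
        rw [mul_pow, mul_pow, ← pow_mul, mul_comm L, pow_mul]; norm_num
    _ ≤ 12 ^ L * 32 ^ L * T ^ 5 := by gcongr; norm_num
    _ = 384 ^ L * T ^ 5 := by rw [← mul_pow]; norm_num
    _ ≤ (31104 / 28125) ^ h * ((3125 / 243) ^ h / (4 / 9) ^ h) := by
        gcongr; rwa [le_div_iff₀ (by positivity)]
    _ = (2 ^ h) ^ 5 := by rw [← div_pow, ← mul_pow, ← pow_mul, mul_comm h, pow_mul]; norm_num

theorem one_le_div_add_ite_add_div {e ℓ m L : ℕ} (hL : 0 < L) :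
    (1 : ℝ) ≤ e / (m + 1) + (if ℓ < L ∧ e ≤ m then 1 else 0) + ℓ / L := by
  have hLR : (0 : ℝ) < L := by exact_mod_cast hL
  have he₀ : (0 : ℝ) ≤ e / (m + 1) := by positivity
  have hℓ₀ : (0 : ℝ) ≤ ℓ / L := by positivity
  by_cases he : e ≤ m
  · by_cases hℓ : ℓ < L
    · simp only [hℓ, he, and_self, if_true]
      linarith
    · have : (1 : ℝ) ≤ ℓ / L := by
        rw [one_le_div hLR]; exact_mod_cast not_lt.1 hℓ
      simp only [hℓ, false_and, if_false]
      linarith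
  · have : (1 : ℝ) ≤ e / (m + 1) := by
      rw [one_le_div (by positivity)]; exact_mod_cast not_le.1 he
    split_ifs <;> linarith

section Index

variable {ι : Type*} [Fintype ι] [DecidableEq ι]

theorem card_short_few_errors_le (H : Finset ι) (m L : ℕ)
    (msg : (ι → Bool) → List Bool) (dec : List Bool → ι → Bool) :
    #{S | (msg S).length < L ∧ #{i ∈ H | dec (msg S) i ≠ S i} ≤ m}
      ≤ 2 ^ L * #{D ∈ H.powerset | #D ≤ m} * 2 ^ (Fintype.card ι - #H) := by
  -- `S` is recovered from its message, its error set on `H` and its values off `H`.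
  let codes := range (2 ^ L) ×ˢ {D ∈ H.powerset | #D ≤ m} ×ˢ
    (univ : Finset ({i // i ∉ H} → Bool))
  have hcodes : #codes = 2 ^ L * #{D ∈ H.powerset | #D ≤ m} * 2 ^ (Fintype.card ι - #H) := by
    simp [codes, Fintype.card_subtype_compl, mul_assoc]
  rw [← hcodes]
  refine card_le_card_of_injOn
    (fun S => (binaryCode (msg S), {i ∈ H | dec (msg S) i ≠ S i}, fun i => S i)) ?_ ?_
  · intro S hS
    simp only [coe_filter, mem_univ, true_and, Set.mem_ofPred_eq] at hS
    simp only [codes, coe_product, Set.mem_prod, mem_coe, mem_range, mem_filter, mem_powerset,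
      filter_subset, true_and, mem_univ, and_true]
    exact ⟨(binaryCode_lt _).trans_le (Nat.pow_le_pow_right two_pos hS.1), hS.2⟩
  · intro S₁ _ S₂ _ h
    simp only [Prod.mk.injEq] at h
    obtain ⟨hcode, herr, hout⟩ := h
    have hmsg := binaryCode_injective hcode
    funext i
    by_cases hi : i ∈ H
    · have := congrArg (i ∈ ·) herr
      simp only [mem_filter, hi, true_and, hmsg, eq_iff_iff] at this
      revert this; cases dec (msg S₂) i <;> cases S₁ i <;> cases S₂ i <;> simp
    · exact congrFun hout ⟨i, hi⟩

theorem twelve_mul_card_short_few_errors_le (H : Finset ι)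
    (msg : (ι → Bool) → List Bool) (dec : List Bool → ι → Bool) {m L : ℕ}
    (hm : 5 * m ≤ 2 * #H) (hL : 60 * L ≤ #H) (hL₅ : 5 ≤ L) :
    12 * (#{S | (msg S).length < L ∧ #{i ∈ H | dec (msg S) i ≠ S i} ≤ m} : ℝ)
      ≤ 2 ^ Fintype.card ι := by
  have hcount : (#{S | (msg S).length < L ∧ #{i ∈ H | dec (msg S) i ≠ S i} ≤ m} : ℝ)
      ≤ 2 ^ L * #{D ∈ H.powerset | #D ≤ m} * 2 ^ (Fintype.card ι - #H) := by
    exact_mod_cast card_short_few_errors_le H m L msg dec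
  have hsubsets : 12 * 2 ^ L * (#{D ∈ H.powerset | #D ≤ m} : ℝ) ≤ 2 ^ #H :=
    twelve_mul_two_pow_mul_le (by positivity)
      (card_filter_card_le_mul_pow_le H m (by norm_num) (by norm_num)) hm hL hL₅
  calc 12 * (#{S | (msg S).length < L ∧ #{i ∈ H | dec (msg S) i ≠ S i} ≤ m} : ℝ)
      ≤ 12 * 2 ^ L * #{D ∈ H.powerset | #D ≤ m} * 2 ^ (Fintype.card ι - #H) := by
        rw [mul_assoc 12, mul_assoc 12]; gcongr
    _ ≤ 2 ^ #H * 2 ^ (Fintype.card ι - #H) := by gcongr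
    _ = 2 ^ Fintype.card ι := by rw [← pow_add, Nat.add_sub_cancel' (card_le_univ H)]

theorem mul_le_sum_length_of_sum_errors_le {R : Type*} [Fintype R] (H : Finset ι)
    (msg : R → (ι → Bool) → List Bool) (out : R → List Bool → ι → Bool) {L : ℕ}
    (hL : 60 * L ≤ #H) (hL₅ : 5 ≤ L)
    (herr : ∑ r, ∑ S, (#{i ∈ H | out r (msg r S) i ≠ S i} : ℝ)
      ≤ 1 / 3 * (Fintype.card R * 2 ^ Fintype.card ι * #H)) :
    L / 12 * (Fintype.card R * 2 ^ Fintype.card ι) ≤ ∑ r, ∑ S, ((msg r S).length : ℝ) := by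
  set K : ℝ := Fintype.card R * 2 ^ Fintype.card ι
  set m := 2 * #H / 5
  have hL₀ : (0 : ℝ) < L := by exact_mod_cast (by omega : 0 < L)
  have hcover : K ≤ (∑ r, ∑ S, (#{i ∈ H | out r (msg r S) i ≠ S i} : ℝ)) / (m + 1)
      + ∑ r, (#{S | (msg r S).length < L ∧ #{i ∈ H | out r (msg r S) i ≠ S i} ≤ m} : ℝ)
      + (∑ r, ∑ S, ((msg r S).length : ℝ)) / L := by
    calc K = ∑ r : R, ∑ S : ι → Bool, (1 : ℝ) := by simp [K]
      _ ≤ ∑ r, ∑ S, ((#{i ∈ H | out r (msg r S) i ≠ S i} : ℝ) / (m + 1)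
            + (if (msg r S).length < L ∧ #{i ∈ H | out r (msg r S) i ≠ S i} ≤ m then 1 else 0)
            + ((msg r S).length : ℝ) / L) :=
          sum_le_sum fun r _ => sum_le_sum fun S _ => one_le_div_add_ite_add_div (by omega)
      _ = _ := by simp only [sum_add_distrib, sum_div, sum_boole]
  have hbad : (∑ r, ∑ S, (#{i ∈ H | out r (msg r S) i ≠ S i} : ℝ)) / (m + 1) ≤ 5 / 6 * K := by
    have hHm : (2 * #H : ℝ) ≤ 5 * (m + 1) := by exact_mod_cast (by omega : 2 * #H ≤ 5 * (m + 1))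
    rw [div_le_iff₀ (by positivity)]
    calc _ ≤ 1 / 3 * (K * #H) := herr
      _ ≤ 1 / 3 * (K * (5 / 2 * (m + 1))) := by gcongr; linarith
      _ = 5 / 6 * K * (m + 1) := by ring
  have hgood : ∑ r, (#{S | (msg r S).length < L ∧ #{i ∈ H | out r (msg r S) i ≠ S i} ≤ m} : ℝ)
      ≤ K / 12 := by
    calc _ ≤ ∑ _r : R, (2 ^ Fintype.card ι / 12 : ℝ) := by
          gcongr with r
          have := twelve_mul_card_short_few_errors_le H (msg r) (out r) (m := m)
            (by omega) hL hL₅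
          linarith
      _ = K / 12 := by simp only [sum_const, card_univ, nsmul_eq_mul, K]; ring
  have hlong : K / 12 * L ≤ ∑ r, ∑ S, ((msg r S).length : ℝ) :=
    (le_div_iff₀ hL₀).1 (by linarith)
  linarith

end Index

theorem card_filter_le_val_add_one {N : ℕ} (hN : 1 ≤ N) :
    #{I : Fin N | (N + 1) / 2 ≤ (I : ℕ) + 1} = N - (N + 1) / 2 + 1 := by
  have hsplit := card_filter_add_card_filter_not (s := univ)
    (fun I : Fin N => (I : ℕ) < (N + 1) / 2 - 1)
  have hH : #{I : Fin N | (N + 1) / 2 ≤ (I : ℕ) + 1} =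
      #{I : Fin N | ¬ (I : ℕ) < (N + 1) / 2 - 1} :=
    congrArg card (filter_congr fun I _ => by omega)
  rw [Fin.card_filter_val_lt, card_univ, Fintype.card_fin] at hsplit
  omega

/-- Any randomized one-way protocol for Index (Alice holds
`S : Fin N → Bool`, Bob holds a 1-indexed index `I` with `⌈N/2⌉ ≤ I ≤ N`, modelled
by random seeds `r : R`, Alice's message `msg r S : List Bool` and Bob's output
`out r`) with error probability at most `1/3` over uniform inputs and seeds has
expected message length `Ω(N)`. -/
theorem stmt13 :
    ∃ c : ℝ, 0 < c ∧ ∃ N0 : ℕ, ∀ N : ℕ, N0 ≤ N →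
      ∀ (R : Type) [Fintype R] [Nonempty R],
      ∀ (msg : R → (Fin N → Bool) → List Bool)
        (out : R → List Bool → Fin N → Bool),
        ((∑ r : R, ∑ S : Fin N → Bool,
            ((Finset.univ.filter
              (fun I : Fin N => (N + 1) / 2 ≤ (I : ℕ) + 1 ∧
                out r (msg r S) I ≠ S I)).card : ℝ))
          ≤ 1 / 3 * ((Fintype.card R : ℝ) * 2 ^ N * ((N - (N + 1) / 2 + 1 : ℕ) : ℝ))) →
        c * N ≤ (∑ r : R, ∑ S : Fin N → Bool, ((msg r S).length : ℝ)) /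
          ((Fintype.card R : ℝ) * 2 ^ N) := by
  refine ⟨1 / 2880, by norm_num, 600, fun N hN R _ _ msg out herr => ?_⟩
  set H : Finset (Fin N) := {I | (N + 1) / 2 ≤ (I : ℕ) + 1}
  have hH : #H = N - (N + 1) / 2 + 1 := card_filter_le_val_add_one (by omega)
  have hlength := mul_le_sum_length_of_sum_errors_le H msg out (L := N / 120)
    (by omega) (by omega) (by simpa only [H, filter_filter, Fintype.card_fin, hH] using herr)
  have hNL : (N : ℝ) ≤ 240 * (N / 120 : ℕ) := by exact_mod_cast (by omega : N ≤ 240 * (N / 120))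
  rw [Fintype.card_fin] at hlength
  rw [le_div_iff₀ (by positivity)]
  calc 1 / 2880 * (N : ℝ) * (Fintype.card R * 2 ^ N)
      ≤ (N / 120 : ℕ) / 12 * (Fintype.card R * 2 ^ N) := by gcongr; linarith
    _ ≤ _ := hlength
end

section
/- Let n, t be positive integers with 3t ≤ n and δ > 0 with 4δt ≥ 1. Any deterministic one-way protocol with distributional error at most δ for exactly solving the 2-block partitioning problem on the hard distribution 𝒴×𝒵 must use at least log₂( C(n−3t+2, t) / (8·C(t, ⌊4δt⌋)·n^{4δt}) ) bits of communication. -/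
open scoped Classical

/-- Bottleneck of the 2-partitioning of the list `L` splitting after the first `s`
elements. -/
def bnL (L : List ℕ) (s : ℕ) : ℕ := max (L.take s).sum (L.drop s).sum

/-- `s` is an optimal separator for partitioning `L` into two contiguous blocks. -/
def IsOptSep (L : List ℕ) (s : ℕ) : Prop :=
  s ≤ L.length ∧ ∀ s' ≤ L.length, bnL L s ≤ bnL L s'

/-- Alice's hard input determined by a choice `b` of which of the `n − 3t + 2`
symbol slots carry a pair `11` (the rest carry a `0`), preceded by `2(t−1)` ones. -/
def yList (t : ℕ) (b : List Bool) : List ℕ :=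
  List.replicate (2 * (t - 1)) 1 ++ (b.map (fun c => if c then [1, 1] else [0])).flatten

/-- Bob's hard input `1^{4(i−1)} 0^{n − 4(i−1)}`. -/
def zList (n i : ℕ) : List ℕ :=
  List.replicate (4 * (i - 1)) 1 ++ List.replicate (n - 4 * (i - 1)) 0

/-!
On `Y ∘ Z_{i+1}` the part of the string before the `i`-th pair `11` of `Y` and the part after it
have the same weight, so the optimal separator is unique and splits that pair: a correct answer
for Bob's input `Z_{i+1}` reveals the position of the `i`-th pair. Within one message class, a
string on which the protocol errs on a set `E` of at most `j = ⌊4δt⌋` of Bob's inputs is therefore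
determined by `E` and the positions of the pairs indexed by `E`, so a class holds at most
`∑_{k ≤ j} C(t,k) N^k ≤ 2 C(t,j) n^j` such strings (the terms at least double from `k` to `k + 1`
because `2t ≤ n`). By Markov's inequality three quarters of the `C(N,t)` strings (`N = n - 3t + 2`
slots) have at most `j` errors, which bounds the number of messages from below.
-/

open Finset

lemma sum_take_le_sum_take (L : List ℕ) {m m' : ℕ} (h : m ≤ m') :
    (L.take m).sum ≤ (L.take m').sum :=
  (List.take_prefix_take_left h).sublist.sum_le_sum fun _ _ => Nat.zero_le _

theorem IsOptSep.eq_length_add_one {A B : List ℕ} (hAB : A.sum = B.sum) {s : ℕ}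
    (h : IsOptSep (A ++ 1 :: 1 :: B) s) : s = A.length + 1 := by
  set L := A ++ 1 :: 1 :: B
  have htake : ∀ k ≤ 2, (L.take (A.length + k)).sum = A.sum + k := by
    intro k hk
    interval_cases k <;> simp [L, List.take_append, List.take_of_length_le]
  have hsplit : ∀ m, (L.take m).sum + (L.drop m).sum = 2 * (A.sum + 1) := fun m => by
    rw [← List.sum_append, List.take_append_drop]
    simp [L, ← hAB]
    ring
  have hopt := h.2 (A.length + 1) (by simp [L])
  have hmid := hsplit (A.length + 1)
  rw [htake 1 (by norm_num)] at hmid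
  rw [bnL, bnL, htake 1 (by norm_num), max_le_iff] at hopt
  have hs : (L.take s).sum = A.sum + 1 := by
    have := hsplit s
    omega
  rcases lt_trichotomy s (A.length + 1) with hlt | heq | hgt
  · have := sum_take_le_sum_take L (show s ≤ A.length + 0 by omega)
    rw [htake 0 (by norm_num)] at this
    omega
  · exact heq
  · have := sum_take_le_sum_take L (show A.length + 2 ≤ s by omega)
    rw [htake 2 le_rfl] at this
    omega

lemma Finset.card_filter_lt_orderEmbOfFin {α : Type*} [LinearOrder α] (s : Finset α) {k : ℕ}
    (h : #s = k) (i : Fin k) : #{x ∈ s | x < s.orderEmbOfFin h i} = i := by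
  have : {x ∈ s | x < s.orderEmbOfFin h i} = (Iio i).map (s.orderEmbOfFin h).toEmbedding := by
    ext x
    simp only [mem_filter, mem_map, mem_Iio, RelEmbedding.coe_toEmbedding]
    constructor
    · rintro ⟨hx, hlt⟩
      obtain ⟨j, rfl⟩ : x ∈ Set.range (s.orderEmbOfFin h) := by
        rw [range_orderEmbOfFin]
        exact hx
      exact ⟨j, (s.orderEmbOfFin h).lt_iff_lt.mp hlt, rfl⟩
    · rintro ⟨j, hj, rfl⟩
      exact ⟨orderEmbOfFin_mem s h j, (s.orderEmbOfFin h).lt_iff_lt.mpr hj⟩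
  rw [this, card_map, Fin.card_Iio]

def slot (c : Bool) : List ℕ := if c then [1, 1] else [0]

lemma yList_eq (t : ℕ) (l : List Bool) :
    yList t l = List.replicate (2 * (t - 1)) 1 ++ (l.map slot).flatten := rfl

lemma flatten_map_slot_eq {l : List Bool} {p : ℕ} (hp : p < l.length) (hl : l[p] = true) :
    (l.map slot).flatten =
      ((l.take p).map slot).flatten ++ 1 :: 1 :: ((l.drop (p + 1)).map slot).flatten := by
  conv_lhs => rw [← List.take_append_drop p l, List.drop_eq_getElem_cons hp, hl]
  simp [slot]

section Slots

variable {N : ℕ} (b : Fin N → Bool)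

lemma length_flatten_map_slot_take_ofFn {p : ℕ} (hp : p ≤ N) :
    (((List.ofFn b).take p).map slot).flatten.length =
      p + #{k : Fin N | (k : ℕ) < p ∧ b k = true} := by
  rw [List.length_flatten, List.map_map, List.map_take, List.map_ofFn, List.sum_take_ofFn]
  have hlen : ∀ c, (slot c).length = 1 + if c = true then 1 else 0 := by decide
  simp only [Function.comp_apply, hlen, sum_add_distrib, sum_const, smul_eq_mul, mul_one,
    sum_boole, Fin.card_filter_val_lt, filter_filter, min_eq_right hp, Nat.cast_id]

lemma sum_flatten_map_slot_take_ofFn (p : ℕ) :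
    (((List.ofFn b).take p).map slot).flatten.sum =
      2 * #{k : Fin N | (k : ℕ) < p ∧ b k = true} := by
  rw [List.sum_flatten, List.map_map, List.map_take, List.map_ofFn, List.sum_take_ofFn]
  have hsum : ∀ c, (slot c).sum = 2 * if c = true then 1 else 0 := by decide
  simp only [Function.comp_apply, hsum, ← mul_sum, sum_boole, filter_filter, Nat.cast_id]

lemma sum_flatten_map_slot_ofFn :
    ((List.ofFn b).map slot).flatten.sum = 2 * #{k | b k = true} := by
  rw [← List.take_of_length_le (List.length_ofFn (f := b)).le, sum_flatten_map_slot_take_ofFn]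
  simp

end Slots

section PairPositions

variable {N t : ℕ}

/-- Position of the `i`-th pair slot of `b`; junk value `0` unless `b` has exactly `t` of them. -/
def pairPos (b : Fin N → Bool) (i : Fin t) : ℕ :=
  if h : #{k | b k = true} = t then ({k | b k = true} : Finset (Fin N)).orderEmbOfFin h i else 0

variable {b : Fin N → Bool}

lemma pairPos_eq (hb : #{k | b k = true} = t) (i : Fin t) :
    pairPos b i = ({k | b k = true} : Finset (Fin N)).orderEmbOfFin hb i :=
  dif_pos hb

lemma pairPos_lt (hb : #{k | b k = true} = t) (i : Fin t) : pairPos b i < N := by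
  rw [pairPos_eq hb]
  exact Fin.is_lt _

lemma apply_pairPos (hb : #{k | b k = true} = t) (i : Fin t) :
    b ⟨pairPos b i, pairPos_lt hb i⟩ = true := by
  convert (mem_filter.mp (orderEmbOfFin_mem _ hb i)).2
  exact pairPos_eq hb i

lemma card_filter_lt_pairPos (hb : #{k | b k = true} = t) (i : Fin t) :
    #{k : Fin N | (k : ℕ) < pairPos b i ∧ b k = true} = i := by
  rw [← card_filter_lt_orderEmbOfFin _ hb i, filter_filter, pairPos_eq hb]
  congr 1
  ext k
  simp only [mem_filter, mem_univ, true_and, Fin.lt_def]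
  exact and_comm

lemma eq_of_pairPos_eq (hb : #{k | b k = true} = t) {b' : Fin N → Bool}
    (hb' : #{k | b' k = true} = t)
    (h : ∀ i : Fin t, pairPos b i = pairPos b' i) : b = b' := by
  have hemb : ⇑(({k | b k = true} : Finset (Fin N)).orderEmbOfFin hb) =
      ⇑(({k | b' k = true} : Finset (Fin N)).orderEmbOfFin hb') := by
    funext i
    exact Fin.ext (by rw [← pairPos_eq hb, ← pairPos_eq hb', h i])
  have hsupp :
      ({k | b k = true} : Finset (Fin N)) = ({k | b' k = true} : Finset (Fin N)) := by
    apply Finset.coe_injective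
    rw [← range_orderEmbOfFin _ hb, ← range_orderEmbOfFin _ hb', hemb]
  funext k
  simpa using congrArg (k ∈ ·) hsupp

end PairPositions

def hardInput (n t : ℕ) {N : ℕ} (b : Fin N → Bool) (i : Fin t) : List ℕ :=
  yList t (List.ofFn b) ++ zList n (i + 1)

lemma sum_zList (n i : ℕ) : (zList n (i + 1)).sum = 4 * i := by
  simp [zList, List.sum_replicate]

theorem eq_of_isOptSep_hardInput (n : ℕ) {N t : ℕ} {b : Fin N → Bool}
    (hb : #{k | b k = true} = t) (i : Fin t) {s : ℕ} (h : IsOptSep (hardInput n t b i) s) :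
    s = 2 * (t - 1) + pairPos b i + i + 1 := by
  have hp : pairPos b i < (List.ofFn b).length := by simpa using pairPos_lt hb i
  have hslots := flatten_map_slot_eq hp (by simpa using apply_pairPos hb i)
  have htotal := congrArg List.sum hslots
  simp only [sum_flatten_map_slot_ofFn, hb, List.sum_append, List.sum_cons,
    sum_flatten_map_slot_take_ofFn, card_filter_lt_pairPos hb] at htotal
  set A :=
    List.replicate (2 * (t - 1)) 1 ++ (((List.ofFn b).take (pairPos b i)).map slot).flatten
  set B := (((List.ofFn b).drop (pairPos b i + 1)).map slot).flatten ++ zList n (i + 1)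
  have hinput : hardInput n t b i = A ++ 1 :: 1 :: B := by
    rw [hardInput, yList_eq, hslots]
    simp [A, B]
  have hAB : A.sum = B.sum := by
    simp only [A, B, List.sum_append, List.sum_replicate, smul_eq_mul, mul_one, sum_zList,
      sum_flatten_map_slot_take_ofFn, card_filter_lt_pairPos hb]
    omega
  have hA : A.length = 2 * (t - 1) + pairPos b i + i := by
    simp only [A, List.length_append, List.length_replicate,
      length_flatten_map_slot_take_ofFn b (pairPos_lt hb i).le, card_filter_lt_pairPos hb]
    ring
  rw [hinput] at h
  rw [IsOptSep.eq_length_add_one hAB h, hA]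

theorem card_le_pow_of_isOptSep (n : ℕ) {N t : ℕ} (a : Fin t → ℕ) (E : Finset (Fin t))
    {G : Finset (Fin N → Bool)}
    (hG : ∀ b ∈ G, #{k | b k = true} = t ∧ ∀ i ∉ E, IsOptSep (hardInput n t b i) (a i)) :
    #G ≤ N ^ #E := by
  calc #G ≤ #(Fintype.piFinset fun _ : E => range N) := by
        refine card_le_card_of_injOn (fun (b : Fin N → Bool) (i : E) => pairPos b (i : Fin t))
          (fun b hb => Fintype.mem_piFinset.2 fun i => mem_range.2 (pairPos_lt (hG b hb).1 _)) ?_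
        intro b hb b' hb' h
        refine eq_of_pairPos_eq (hG b hb).1 (hG b' hb').1 fun i => ?_
        by_cases hi : i ∈ E
        · exact congrFun h ⟨i, hi⟩
        · have e := eq_of_isOptSep_hardInput n (hG b hb).1 i ((hG b hb).2 i hi)
          have e' := eq_of_isOptSep_hardInput n (hG b' hb').1 i ((hG b' hb').2 i hi)
          omega
    _ = N ^ #E := by simp

lemma sum_powerset_card_le_le_sum_choose_mul {α : Type*} (s : Finset α) (j : ℕ) (f : ℕ → ℕ) :
    ∑ E ∈ s.powerset with #E ≤ j, f #E ≤ ∑ k ∈ range (j + 1), (#s).choose k * f k := by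
  rw [sum_filter, sum_powerset_apply_card (fun m => if m ≤ j then f m else 0)]
  simp only [smul_eq_mul, mul_ite, mul_zero]
  rw [← sum_filter]
  exact sum_le_sum_of_subset fun m hm => by
    simp only [mem_filter, mem_range] at hm ⊢
    omega

theorem card_le_sum_choose_mul_pow (n j : ℕ) {N t : ℕ} (a : Fin t → ℕ)
    {G : Finset (Fin N → Bool)}
    (hG : ∀ b ∈ G, #{k | b k = true} = t ∧ #{i | ¬ IsOptSep (hardInput n t b i) (a i)} ≤ j) :
    #G ≤ ∑ k ∈ range (j + 1), t.choose k * N ^ k := by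
  let errors (b : Fin N → Bool) : Finset (Fin t) := {i | ¬ IsOptSep (hardInput n t b i) (a i)}
  calc #G = ∑ E ∈ (univ : Finset (Fin t)).powerset with #E ≤ j, #{b ∈ G | errors b = E} := by
        refine card_eq_sum_card_fiberwise fun b hb => ?_
        simpa [errors] using (hG b hb).2
    _ ≤ ∑ E ∈ (univ : Finset (Fin t)).powerset with #E ≤ j, N ^ #E := by
        refine sum_le_sum fun E _ => card_le_pow_of_isOptSep n a E fun b hb => ?_
        obtain ⟨hbG, rfl⟩ := mem_filter.mp hb
        exact ⟨(hG b hbG).1, fun i hi => by simpa [errors] using hi⟩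
    _ ≤ ∑ k ∈ range (j + 1), t.choose k * N ^ k := by
        simpa using sum_powerset_card_le_le_sum_choose_mul (univ : Finset (Fin t)) j (N ^ ·)

theorem card_le_sum_choose_mul_pow_mul (n j : ℕ) {N t K : ℕ} (msg : (Fin N → Bool) → Fin K)
    (out : Fin K → Fin t → ℕ) {G : Finset (Fin N → Bool)}
    (hG : ∀ b ∈ G, #{k | b k = true} = t ∧
      #{i | ¬ IsOptSep (hardInput n t b i) (out (msg b) i)} ≤ j) :
    #G ≤ (∑ k ∈ range (j + 1), t.choose k * N ^ k) * K := by
  simpa using card_le_mul_card_image_of_maps_to (f := msg) (t := univ) (fun _ _ => mem_univ _) _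
    fun m _ => card_le_sum_choose_mul_pow n j (out m) fun b hb => by
      obtain ⟨hbG, rfl⟩ := mem_filter.mp hb
      exact hG b hbG

lemma card_filter_card_eq_choose (α : Type*) [Fintype α] [DecidableEq α] (t : ℕ) :
    #{b : α → Bool | #{k | b k = true} = t} = (Fintype.card α).choose t := by
  rw [← card_univ, ← card_powersetCard]
  refine card_nbij' (fun b => ({k | b k = true} : Finset α)) (fun E k => decide (k ∈ E))
    ?_ ?_ ?_ ?_
  · intro b hb
    simpa using hb
  · intro E hE
    simpa using (mem_powersetCard.mp hE).2
  · intro b _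
    funext k
    simp
  · intro E _
    ext k
    simp

lemma three_mul_card_le_four_mul_card_filter {ι : Type*} (s : Finset ι) (f : ι → ℕ)
    {δ μ : ℝ} (hδμ : 0 < δ * μ) (hsum : ∑ a ∈ s, (f a : ℝ) ≤ δ * (#s * μ)) :
    3 * #s ≤ 4 * #{a ∈ s | f a ≤ ⌊4 * δ * μ⌋₊} := by
  set j := ⌊4 * δ * μ⌋₊
  have hbad : (#{a ∈ s | ¬ f a ≤ j} : ℝ) * (4 * δ * μ) ≤ δ * (#s * μ) := by
    calc (#{a ∈ s | ¬ f a ≤ j} : ℝ) * (4 * δ * μ) ≤ ∑ a ∈ s with ¬ f a ≤ j, (f a : ℝ) := by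
          rw [← nsmul_eq_mul]
          refine card_nsmul_le_sum _ _ _ fun a ha => ?_
          have : j + 1 ≤ f a := by simpa using (mem_filter.mp ha).2
          exact (Nat.lt_floor_add_one _).le.trans (by exact_mod_cast this)
      _ ≤ ∑ a ∈ s, (f a : ℝ) :=
          sum_le_sum_of_subset_of_nonneg (filter_subset _ _) fun _ _ _ => by positivity
      _ ≤ δ * (#s * μ) := hsum
  have hbad' : 4 * #{a ∈ s | ¬ f a ≤ j} ≤ #s := by
    have : (4 * #{a ∈ s | ¬ f a ≤ j} : ℝ) * (δ * μ) ≤ #s * (δ * μ) := by linarith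
    exact_mod_cast le_of_mul_le_mul_right this hδμ
  have := card_filter_add_card_filter_not (s := s) (fun a => f a ≤ j)
  omega

lemma sum_range_succ_le_two_mul {a : ℕ → ℕ} {j : ℕ} (ha : ∀ k < j, 2 * a k ≤ a (k + 1)) :
    ∑ k ∈ range (j + 1), a k ≤ 2 * a j := by
  induction j with
  | zero =>
    rw [sum_range_one]
    omega
  | succ j ih =>
    rw [sum_range_succ]
    have := ih fun k hk => ha k (by omega)
    have := ha j (by omega)
    omega

lemma two_mul_choose_mul_pow_le {n t k : ℕ} (h2t : 2 * t ≤ n) (hk : k < t) :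
    2 * (t.choose k * n ^ k) ≤ t.choose (k + 1) * n ^ (k + 1) := by
  have hchoose : t.choose k ≤ t * t.choose (k + 1) :=
    calc t.choose k ≤ t.choose k * (t - k) := Nat.le_mul_of_pos_right _ (by omega)
      _ = t.choose (k + 1) * (k + 1) := (Nat.choose_succ_right_eq t k).symm
      _ ≤ t * t.choose (k + 1) := by rw [mul_comm]; exact Nat.mul_le_mul_right _ hk
  calc 2 * (t.choose k * n ^ k) ≤ 2 * (t * t.choose (k + 1) * n ^ k) := by gcongr
    _ = 2 * t * (t.choose (k + 1) * n ^ k) := by ring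
    _ ≤ n * (t.choose (k + 1) * n ^ k) := by gcongr
    _ = t.choose (k + 1) * n ^ (k + 1) := by ring

lemma sum_choose_mul_pow_le {N n t j : ℕ} (hN : N ≤ n) (h2t : 2 * t ≤ n) (hj : j ≤ t) :
    ∑ k ∈ range (j + 1), t.choose k * N ^ k ≤ 2 * (t.choose j * n ^ j) :=
  calc ∑ k ∈ range (j + 1), t.choose k * N ^ k ≤ ∑ k ∈ range (j + 1), t.choose k * n ^ k := by
        gcongr
    _ ≤ 2 * (t.choose j * n ^ j) :=
        sum_range_succ_le_two_mul fun k hk => two_mul_choose_mul_pow_le h2t (by omega)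

lemma logb_le_logb_of_nonneg {b x y : ℝ} (hb : 1 < b) (hx : 0 ≤ x) (hy : 1 ≤ y) (hxy : x ≤ y) :
    Real.logb b x ≤ Real.logb b y := by
  rcases hx.eq_or_lt with rfl | hx
  · simpa using Real.logb_nonneg hb hy
  · exact Real.logb_le_logb_of_le hb hx hxy

theorem stmt16_general (n t : ℕ) (δ : ℝ) (hn : 1 ≤ n) (ht : 1 ≤ t) (h3t : 3 * t ≤ n)
    (hδt : (1 : ℝ) ≤ 4 * δ * t)
    (K : ℕ) (msg : (Fin (n - 3 * t + 2) → Bool) → Fin K)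
    (out : Fin K → Fin t → ℕ)
    (herr :
      ((∑ b ∈ Finset.univ.filter
            (fun b : Fin (n - 3 * t + 2) → Bool =>
              (Finset.univ.filter (fun k => b k = true)).card = t),
          (Finset.univ.filter (fun i : Fin t =>
            ¬ IsOptSep (yList t (List.ofFn b) ++ zList n ((i : ℕ) + 1))
                (out (msg b) i))).card : ℝ))
        ≤ δ * (((n - 3 * t + 2).choose t : ℝ) * t)) :
    Real.logb 2 (((n - 3 * t + 2).choose t : ℝ) /
        (8 * (t.choose ⌊4 * δ * (t : ℝ)⌋₊ : ℝ) * (n : ℝ) ^ (4 * δ * (t : ℝ))))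
      ≤ Real.logb 2 K := by
  generalize hN : n - 3 * t + 2 = N at msg herr ⊢
  set j := ⌊4 * δ * (t : ℝ)⌋₊
  have hK : (1 : ℝ) ≤ K := by exact_mod_cast (msg fun _ => false).pos
  refine logb_le_logb_of_nonneg one_lt_two (by positivity) hK ?_
  rcases lt_or_ge t j with hjt | hjt
  · -- then `t.choose j = 0` and the left side is `x / 0 = 0`
    simp [Nat.choose_eq_zero_of_lt hjt]
  set S : Finset (Fin N → Bool) := {b | #{k | b k = true} = t}
  set G := {b ∈ S | #{i | ¬ IsOptSep (hardInput n t b i) (out (msg b) i)} ≤ j}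
  have hS : #S = N.choose t := by simpa using card_filter_card_eq_choose (Fin N) t
  have hG : 3 * N.choose t ≤ 4 * #G := by
    rw [← hS]
    exact three_mul_card_le_four_mul_card_filter S _ (by linarith) (by rw [hS]; exact herr)
  have hGK : #G ≤ (∑ k ∈ range (j + 1), t.choose k * N ^ k) * K :=
    card_le_sum_choose_mul_pow_mul n j msg out fun b hb => by simpa [G, S] using hb
  have hsum := sum_choose_mul_pow_le (by omega : N ≤ n) (by omega : 2 * t ≤ n) hjt
  have hpow : (n : ℝ) ^ j ≤ (n : ℝ) ^ (4 * δ * (t : ℝ)) := by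
    rw [← Real.rpow_natCast]
    exact Real.rpow_le_rpow_of_exponent_le (by exact_mod_cast hn) (Nat.floor_le (by linarith))
  have hcount : (3 * N.choose t : ℝ) ≤ 8 * t.choose j * n ^ j * K := by
    have := hG.trans (Nat.mul_le_mul_left 4 (hGK.trans (Nat.mul_le_mul_right K hsum)))
    exact_mod_cast this.trans_eq (by ring)
  have hD : (0 : ℝ) < 8 * t.choose j * (n : ℝ) ^ (4 * δ * (t : ℝ)) := by
    have := Nat.choose_pos hjt
    have := Real.rpow_pos_of_pos (show (0 : ℝ) < n by exact_mod_cast hn) (4 * δ * (t : ℝ))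
    positivity
  rw [div_le_iff₀ hD]
  have : (0 : ℝ) ≤ t.choose j * K := by positivity
  nlinarith

/-- for `n, t ≥ 1`, `3t ≤ n`, `δ > 0` with `4δt ≥ 1`, any
deterministic one-way protocol (message `msg b ∈ Fin K`, output `out`) that solves
the 2-block partitioning problem exactly on the hard distribution `𝒴 × 𝒵`
(uniform `b` with exactly `t` pair-slots, uniform `i ∈ {1,…,t}`) with
distributional error at most `δ` must communicate at least
`log₂( C(n−3t+2, t) / (8·C(t,⌊4δt⌋)·n^{4δt}) )` bits, i.e.
`log₂ K` is at least that quantity. -/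
theorem stmt16 (n t : ℕ) (δ : ℝ) (hn : 1 ≤ n) (ht : 1 ≤ t) (h3t : 3 * t ≤ n)
    (hδ : 0 < δ) (hδt : (1 : ℝ) ≤ 4 * δ * t)
    (K : ℕ) (msg : (Fin (n - 3 * t + 2) → Bool) → Fin K)
    (out : Fin K → Fin t → ℕ)
    (herr :
      ((∑ b ∈ Finset.univ.filter
            (fun b : Fin (n - 3 * t + 2) → Bool =>
              (Finset.univ.filter (fun k => b k = true)).card = t),
          (Finset.univ.filter (fun i : Fin t =>
            ¬ IsOptSep (yList t (List.ofFn b) ++ zList n ((i : ℕ) + 1))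
                (out (msg b) i))).card : ℝ))
        ≤ δ * (((n - 3 * t + 2).choose t : ℝ) * t)) :
    Real.logb 2 (((n - 3 * t + 2).choose t : ℝ) /
        (8 * (t.choose ⌊4 * δ * (t : ℝ)⌋₊ : ℝ) * (n : ℝ) ^ (4 * δ * (t : ℝ))))
      ≤ Real.logb 2 K :=
  stmt16_general n t δ hn ht h3t hδt K msg out herr
end

section
/- Let t be a positive integer and i ∈ {1,...,t}. If 1/(2t−1+2(i−1)) > ε, then any (1+ε)-approximate 2-partitioning of a sequence of total weight 4t−2+4(i−1) must achieve the perfectly balanced bottleneck value 2t−1+2(i−1). In particular, choosing t = ⌊1/(4ε)⌋ ensures that for all i ∈ {1,...,t}, any (1+ε)-approximation solves these instances exactly. -/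
/-- Let `t ≥ 1`, `1 ≤ i ≤ t` and `ε < 1/(2t−1+2(i−1))`. Then any
`(1+ε)`-approximate 2-partitioning of a sequence of total weight `4t−2+4(i−1)`
that admits a perfectly balanced split of bottleneck `2t−1+2(i−1)` must itself
achieve bottleneck exactly `2t−1+2(i−1)`. In particular, choosing `t = ⌊1/(4ε)⌋`
ensures the hypothesis `ε < 1/(2t−1+2(i−1))` for all `i ∈ {1,…,t}`. -/
theorem stmt17 :
    (∀ (t i : ℕ) (ε : ℝ) (L : List ℕ), 1 ≤ t → 1 ≤ i → i ≤ t → 0 < ε →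
      ε < 1 / ((2 * t + 2 * i - 3 : ℕ) : ℝ) →
      L.sum = 4 * t + 4 * i - 6 →
      (∃ s ≤ L.length, bnL L s = 2 * t + 2 * i - 3) →
      ∀ s ≤ L.length, (bnL L s : ℝ) ≤ (1 + ε) * ((2 * t + 2 * i - 3 : ℕ) : ℝ) →
        bnL L s = 2 * t + 2 * i - 3) ∧
    (∀ ε : ℝ, 0 < ε → 1 ≤ ⌊1 / (4 * ε)⌋₊ → ∀ i : ℕ, 1 ≤ i → i ≤ ⌊1 / (4 * ε)⌋₊ →
      ε < 1 / ((2 * ⌊1 / (4 * ε)⌋₊ + 2 * i - 3 : ℕ) : ℝ)) := by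
  constructor
  · intro t i ε L ht hi hit hε hεlt hL hex s hs hb
    set m := 2 * t + 2 * i - 3 with hm
    have hm1 : 1 ≤ m := by omega
    have htd : (L.take s).sum + (L.drop s).sum = L.sum := by
      rw [← List.sum_append, List.take_append_drop]
    have hge : m ≤ bnL L s := by
      unfold bnL; omega
    by_contra hne
    have h1 : m + 1 ≤ bnL L s := by omega
    have hmr : (1:ℝ) ≤ (m:ℝ) := by exact_mod_cast hm1
    have hkey : ((m:ℝ) + 1) ≤ (1 + ε) * (m:ℝ) := by
      calc ((m:ℝ) + 1) ≤ (bnL L s : ℝ) := by exact_mod_cast h1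
        _ ≤ (1 + ε) * (m:ℝ) := hb
    have hεm : ε < 1 / (m:ℝ) := hεlt
    have : ε * (m:ℝ) < 1 := by
      rw [lt_div_iff₀ (by linarith)] at hεm
      linarith
    nlinarith
  · intro ε hε ht i hi hit
    set t := ⌊1 / (4 * ε)⌋₊ with htdef
    have h1 : (t : ℝ) ≤ 1 / (4 * ε) := Nat.floor_le (by positivity)
    have h4 : 4 * ε * (t:ℝ) ≤ 1 := by
      rw [le_div_iff₀ (by positivity)] at h1
      linarith
    have hpos : 0 < (2 * t + 2 * i - 3 : ℕ) := by omega
    have hposR : (0:ℝ) < ((2 * t + 2 * i - 3 : ℕ) : ℝ) := by exact_mod_cast hpos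
    rw [lt_div_iff₀ hposR]
    have hle : (2 * t + 2 * i - 3 : ℕ) ≤ 4 * t - 3 := by omega
    have hleR : ((2 * t + 2 * i - 3 : ℕ) : ℝ) ≤ 4 * (t:ℝ) - 3 := by
      have h3 : 3 ≤ 4 * t := by omega
      have := (Nat.cast_le (α := ℝ)).mpr hle
      rw [Nat.cast_sub h3] at this
      push_cast at this
      linarith
    have htR : (1:ℝ) ≤ (t:ℝ) := by exact_mod_cast ht
    nlinarith
end
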